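/- Under the hypotheses of Theorem 1 (ξ, η : [0,∞) → ℝ⁴ differentiable; M differentiable, symmetric, with c_m‖x‖² ≤ xᵀM(t)x ≤ c_M‖x‖², 0 < c_m ≤ c_M; η(t)ᵀ(½M'(t) − C(t))η(t) = 0; xᵀB(t)x ≥ B̲‖x‖² with B̲ ≥ 1/4; ‖χ(t)‖ ≤ ρ₁ + ρ₂‖z₁(t)‖ + ρ₃‖z₁(t)‖² with ρᵢ ≥ 0; gains α, k₁, ε > 0; closed loop ξ' = η − αξ and Mη' = χ − Cη − ξ − B(k₁η + (1/ε)ρ(‖z₁‖)²η)), the trajectory is uniformly bounded: for all t ≥ 0, ‖z₁(t)‖² ≤ (1/a)(V(0) + ε/δ), where z₁(t) = (ξ(t), η(t)), V(t) = ½‖ξ(t)‖² + ½η(t)ᵀM(t)η(t), a = min(1/2, c_m/2), b = max(1/2, c_M/2), and δ = min(α, B̲k₁)/b. In particular ξ and η are bounded functions. -/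

import Mathlib

/-!
`V` is sandwiched between `a‖z₁‖²` and `b‖z₁‖²`. Along the closed loop the interconnection terms
`±⟪ξ, η⟫` cancel, and so do `½ ηᵀM'η` and `ηᵀCη` by the skew-symmetry hypothesis, leaving
`V' = -α‖ξ‖² + ⟪η, χ⟫ - (k₁ + ρ²/ε) ηᵀBη`. By Young's inequality
`‖η‖ρ ≤ ε + ρ²‖η‖²/(4ε)`, and `B̲ ≥ 1/4` lets the robust term `ρ²/ε ηᵀBη` absorb the
disturbance up to `ε`. Hence `V' ≤ -δV + ε`, and Grönwall's inequality gives
`V(t) ≤ V(0) + ε/δ`.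
-/

/-- The quadratic form `xᵀ A x`. -/
noncomputable def quadForm (A : Matrix (Fin 4) (Fin 4) ℝ) (x : EuclideanSpace ℝ (Fin 4)) : ℝ :=
  ∑ i, ∑ j, x i * A i j * x j

/-- The action of a matrix on a vector of `EuclideanSpace ℝ (Fin 4)` (i.e. `A x`). -/
noncomputable def mulVecE (A : Matrix (Fin 4) (Fin 4) ℝ) (x : EuclideanSpace ℝ (Fin 4)) :
    EuclideanSpace ℝ (Fin 4) :=
  (EuclideanSpace.equiv (Fin 4) ℝ).symm (A.mulVec ((EuclideanSpace.equiv (Fin 4) ℝ) x))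

/-- The stacked vector `z = (x, y) ∈ ℝ⁸` with `‖z‖² = ‖x‖² + ‖y‖²`. -/
noncomputable def stack (x y : EuclideanSpace ℝ (Fin 4)) :
    WithLp 2 (EuclideanSpace ℝ (Fin 4) × EuclideanSpace ℝ (Fin 4)) :=
  (WithLp.equiv 2 _).symm (x, y)

open scoped RealInnerProductSpace

theorem le_add_div_of_hasDerivAt_le_neg_mul_add {f f' : ℝ → ℝ} {δ ε : ℝ} (hδ : 0 < δ)
    (hε : 0 ≤ ε) (hf : ∀ t, 0 ≤ t → HasDerivAt f (f' t) t)
    (hbound : ∀ t, 0 ≤ t → f' t ≤ -δ * f t + ε) (hf0 : 0 ≤ f 0) {t : ℝ} (ht : 0 ≤ t) :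
    f t ≤ f 0 + ε / δ := by
  have hgron := le_gronwallBound_of_liminf_deriv_right_le (f' := f') (δ := f 0) (b := t)
    (fun s hs => (hf s hs.1).continuousAt.continuousWithinAt)
    (fun s hs r hr => by simpa [slope_def_field, div_eq_inv_mul] using
      (hf s hs.1).hasDerivWithinAt.liminf_right_slope_le hr)
    le_rfl (fun s hs => hbound s hs.1) t ⟨ht, le_rfl⟩
  have hexp1 : Real.exp (-δ * t) ≤ 1 := Real.exp_le_one_iff.mpr (by nlinarith)
  rw [sub_zero, gronwallBound_of_K_ne_0 (neg_ne_zero.mpr hδ.ne')] at hgron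
  calc f t ≤ f 0 * Real.exp (-δ * t) + ε / δ * (1 - Real.exp (-δ * t)) := by
        convert hgron using 1; rw [div_neg]; ring
    _ ≤ f 0 + ε / δ := by nlinarith [Real.exp_pos (-δ * t), div_nonneg hε hδ.le]

theorem norm_stack_sq (x y : EuclideanSpace ℝ (Fin 4)) :
    ‖stack x y‖ ^ 2 = ‖x‖ ^ 2 + ‖y‖ ^ 2 :=
  WithLp.prod_norm_sq_eq_of_L2 _

theorem mulVecE_smul (A : Matrix (Fin 4) (Fin 4) ℝ) (c : ℝ) (x : EuclideanSpace ℝ (Fin 4)) :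
    mulVecE A (c • x) = c • mulVecE A x :=
  map_smul (Matrix.toEuclideanLin A) c x

theorem inner_mulVecE (A : Matrix (Fin 4) (Fin 4) ℝ) (x y : EuclideanSpace ℝ (Fin 4)) :
    ⟪x, mulVecE A y⟫ = ∑ i, ∑ j, x i * A i j * y j := by
  simp only [mulVecE, PiLp.continuousLinearEquiv_symm_apply, PiLp.continuousLinearEquiv_apply,
    PiLp.inner_apply, RCLike.inner_apply, Real.ringHom_apply, Matrix.mulVec, dotProduct,
    Finset.sum_mul]
  exact Finset.sum_congr rfl fun i _ => Finset.sum_congr rfl fun j _ => by ring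

theorem quadForm_eq_inner (A : Matrix (Fin 4) (Fin 4) ℝ) (x : EuclideanSpace ℝ (Fin 4)) :
    quadForm A x = ⟪x, mulVecE A x⟫ :=
  (inner_mulVecE A x x).symm

theorem quadForm_smul_sub (c : ℝ) (A B : Matrix (Fin 4) (Fin 4) ℝ) (x : EuclideanSpace ℝ (Fin 4)) :
    quadForm (c • A - B) x = c * quadForm A x - quadForm B x := by
  simp only [quadForm, Matrix.sub_apply, Matrix.smul_apply, smul_eq_mul, Finset.mul_sum,
    ← Finset.sum_sub_distrib]
  exact Finset.sum_congr rfl fun i _ => Finset.sum_congr rfl fun j _ => by ring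

theorem inner_mulVecE_comm {A : Matrix (Fin 4) (Fin 4) ℝ} (hA : A.IsSymm)
    (x y : EuclideanSpace ℝ (Fin 4)) : ⟪x, mulVecE A y⟫ = ⟪y, mulVecE A x⟫ := by
  rw [inner_mulVecE, inner_mulVecE, Finset.sum_comm]
  exact Finset.sum_congr rfl fun i _ => Finset.sum_congr rfl fun j _ => by
    rw [hA.apply j i]; ring

theorem hasDerivAt_quadForm {M : ℝ → Matrix (Fin 4) (Fin 4) ℝ} {M' : Matrix (Fin 4) (Fin 4) ℝ}
    {y : ℝ → EuclideanSpace ℝ (Fin 4)} {y' : EuclideanSpace ℝ (Fin 4)} {t : ℝ}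
    (hM : ∀ i j, HasDerivAt (fun s => M s i j) (M' i j) t) (hy : HasDerivAt y y' t)
    (hsymm : (M t).IsSymm) :
    HasDerivAt (fun s => quadForm (M s) (y s)) (quadForm M' (y t) + 2 * ⟪y t, mulVecE (M t) y'⟫)
      t := by
  have hyi (i : Fin 4) : HasDerivAt (fun s => y s i) (y' i) t :=
    (EuclideanSpace.proj i : EuclideanSpace ℝ (Fin 4) →L[ℝ] ℝ).hasFDerivAt.comp_hasDerivAt t hy
  have hsum := HasDerivAt.fun_sum (u := Finset.univ) fun i _ =>
    HasDerivAt.fun_sum (u := Finset.univ) fun j _ => ((hyi i).fun_mul (hM i j)).fun_mul (hyi j)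
  refine hsum.congr_deriv ?_
  rw [two_mul]
  nth_rw 1 [inner_mulVecE_comm hsymm]
  simp only [quadForm, inner_mulVecE, ← Finset.sum_add_distrib]
  exact Finset.sum_congr rfl fun i _ => Finset.sum_congr rfl fun j _ => by ring

theorem lyapunov_deriv_eq_of_closedLoop {M Md C B : Matrix (Fin 4) (Fin 4) ℝ}
    {ξ η ξd ηd χ : EuclideanSpace ℝ (Fin 4)} {α k c : ℝ}
    (hskew : quadForm ((1 / 2 : ℝ) • Md - C) η = 0) (h₁ : ξd = η - α • ξ)
    (h₂ : mulVecE M ηd = χ - mulVecE C η - ξ - mulVecE B (k • η + c • η)) :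
    1 / 2 * (2 * ⟪ξ, ξd⟫) + 1 / 2 * (quadForm Md η + 2 * ⟪η, mulVecE M ηd⟫)
      = -α * ‖ξ‖ ^ 2 + ⟪η, χ⟫ - (k + c) * quadForm B η := by
  rw [quadForm_smul_sub] at hskew
  rw [h₁, h₂, ← add_smul, mulVecE_smul]
  simp only [inner_sub_right, inner_smul_right, real_inner_self_eq_norm_sq, ← quadForm_eq_inner,
    real_inner_comm ξ η]
  linarith

theorem inner_sub_damping_le {E : Type*} [NormedAddCommGroup E] [InnerProductSpace ℝ E]
    {x y : E} {ε k β r q : ℝ} (hε : 0 < ε) (hk : 0 ≤ k) (hβ : 1 / 4 ≤ β) (hy : ‖y‖ ≤ r)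
    (hq : β * ‖x‖ ^ 2 ≤ q) :
    ⟪x, y⟫ - (k + 1 / ε * r ^ 2) * q ≤ ε - k * β * ‖x‖ ^ 2 := by
  have hxy : ⟪x, y⟫ ≤ ‖x‖ * r :=
    (real_inner_le_norm x y).trans (mul_le_mul_of_nonneg_left hy (norm_nonneg x))
  have young : ‖x‖ * r ≤ ε + (‖x‖ * r) ^ 2 / (4 * ε) := by
    rw [← sub_nonneg, show ε + (‖x‖ * r) ^ 2 / (4 * ε) - ‖x‖ * r
      = (‖x‖ * r - 2 * ε) ^ 2 / (4 * ε) by field_simp; ring]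
    positivity
  have absorb : (‖x‖ * r) ^ 2 / (4 * ε) ≤ 1 / ε * r ^ 2 * q := by
    rw [div_le_iff₀ (by positivity)]
    have : r ^ 2 * (‖x‖ ^ 2 / 4) ≤ r ^ 2 * q :=
      mul_le_mul_of_nonneg_left (by nlinarith [sq_nonneg ‖x‖]) (sq_nonneg r)
    field_simp
    nlinarith
  have damping : k * (β * ‖x‖ ^ 2) ≤ k * q := mul_le_mul_of_nonneg_left hq hk
  nlinarith

theorem neg_mul_sub_mul_le_neg_min_div_mul {α κ b X Y V : ℝ} (hα : 0 ≤ α) (hκ : 0 ≤ κ)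
    (hb : 0 < b) (hX : 0 ≤ X) (hY : 0 ≤ Y) (hV : V ≤ b * (X + Y)) :
    -α * X - κ * Y ≤ -(min α κ / b) * V := by
  have hmin : min α κ / b * V ≤ min α κ * (X + Y) := by
    calc min α κ / b * V ≤ min α κ / b * (b * (X + Y)) :=
          mul_le_mul_of_nonneg_left hV (by positivity)
      _ = min α κ * (X + Y) := by field_simp
  nlinarith [min_le_left α κ, min_le_right α κ]

theorem min_mul_le_half_add_half {c X Y q : ℝ} (hX : 0 ≤ X) (hY : 0 ≤ Y) (hq : c * Y ≤ q) :
    min (1 / 2) (c / 2) * (X + Y) ≤ 1 / 2 * X + 1 / 2 * q := by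
  nlinarith [min_le_left (1 / 2 : ℝ) (c / 2), min_le_right (1 / 2 : ℝ) (c / 2)]

theorem half_add_half_le_max_mul {c X Y q : ℝ} (hX : 0 ≤ X) (hY : 0 ≤ Y) (hq : q ≤ c * Y) :
    1 / 2 * X + 1 / 2 * q ≤ max (1 / 2) (c / 2) * (X + Y) := by
  nlinarith [le_max_left (1 / 2 : ℝ) (c / 2), le_max_right (1 / 2 : ℝ) (c / 2)]

theorem stmt6_general
    (ξ η ξd ηd : ℝ → EuclideanSpace ℝ (Fin 4))
    (hξ : ∀ t, 0 ≤ t → HasDerivAt ξ (ξd t) t) (hη : ∀ t, 0 ≤ t → HasDerivAt η (ηd t) t)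
    (z₁ : ℝ → WithLp 2 (EuclideanSpace ℝ (Fin 4) × EuclideanSpace ℝ (Fin 4)))
    (hz₁ : z₁ = fun t => stack (ξ t) (η t))
    (c_m c_M : ℝ) (hcm : 0 < c_m)
    (M Md : ℝ → Matrix (Fin 4) (Fin 4) ℝ)
    (hM : ∀ (i j : Fin 4) (t : ℝ), 0 ≤ t → HasDerivAt (fun s => M s i j) (Md t i j) t)
    (hMsymm : ∀ t, (M t).IsSymm)
    (hMlow : ∀ t (x : EuclideanSpace ℝ (Fin 4)), c_m * ‖x‖ ^ 2 ≤ quadForm (M t) x)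
    (hMhigh : ∀ t (x : EuclideanSpace ℝ (Fin 4)), quadForm (M t) x ≤ c_M * ‖x‖ ^ 2)
    (C B : ℝ → Matrix (Fin 4) (Fin 4) ℝ)
    (hskew : ∀ t, 0 ≤ t → quadForm ((1 / 2 : ℝ) • Md t - C t) (η t) = 0)
    (Blo : ℝ) (hBlo : (1 / 4 : ℝ) ≤ Blo)
    (hB : ∀ t (x : EuclideanSpace ℝ (Fin 4)), Blo * ‖x‖ ^ 2 ≤ quadForm (B t) x)
    (ρ : ℝ → ℝ)
    (χ : ℝ → EuclideanSpace ℝ (Fin 4)) (hχ : ∀ t, 0 ≤ t → ‖χ t‖ ≤ ρ ‖z₁ t‖)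
    (α k₁ ε : ℝ) (hα : 0 < α) (hk₁ : 0 < k₁) (hε : 0 < ε)
    (hloop₁ : ∀ t, 0 ≤ t → ξd t = η t - α • ξ t)
    (hloop₂ : ∀ t, 0 ≤ t → mulVecE (M t) (ηd t)
      = χ t - mulVecE (C t) (η t) - ξ t
        - mulVecE (B t) (k₁ • η t + ((1 / ε) * (ρ ‖z₁ t‖) ^ 2) • η t))
    (V : ℝ → ℝ)
    (hV : V = fun t => (1 / 2) * ‖ξ t‖ ^ 2 + (1 / 2) * quadForm (M t) (η t))
    (a b δ : ℝ) (ha : a = min (1 / 2) (c_m / 2)) (hb : b = max (1 / 2) (c_M / 2))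
    (hδ : δ = min α (Blo * k₁) / b) :
    (∀ t, 0 ≤ t → ‖z₁ t‖ ^ 2 ≤ (1 / a) * (V 0 + ε / δ)) ∧
      ∃ K : ℝ, ∀ t, 0 ≤ t → ‖ξ t‖ ≤ K ∧ ‖η t‖ ≤ K := by
  have hz t : ‖z₁ t‖ ^ 2 = ‖ξ t‖ ^ 2 + ‖η t‖ ^ 2 := by rw [hz₁, norm_stack_sq]
  have hVlow t : a * ‖z₁ t‖ ^ 2 ≤ V t := by
    rw [ha, hz, hV]; exact min_mul_le_half_add_half (by positivity) (by positivity) (hMlow t _)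
  have hVup t : V t ≤ b * (‖ξ t‖ ^ 2 + ‖η t‖ ^ 2) := by
    rw [hb, hV]; exact half_add_half_le_max_mul (by positivity) (by positivity) (hMhigh t _)
  have ha0 : 0 < a := ha ▸ lt_min (by norm_num) (by positivity)
  have hb0 : 0 < b := hb ▸ lt_max_of_lt_left (by norm_num)
  have hδ0 : 0 < δ := hδ ▸ div_pos (lt_min hα (by positivity)) hb0
  have hVderiv t (ht : 0 ≤ t) : HasDerivAt V (1 / 2 * (2 * ⟪ξ t, ξd t⟫)
      + 1 / 2 * (quadForm (Md t) (η t) + 2 * ⟪η t, mulVecE (M t) (ηd t)⟫)) t := by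
    rw [hV]
    exact ((hξ t ht).norm_sq.const_mul _).add
      ((hasDerivAt_quadForm (fun i j => hM i j t ht) (hη t ht) (hMsymm t)).const_mul _)
  have hdiss t (ht : 0 ≤ t) : 1 / 2 * (2 * ⟪ξ t, ξd t⟫)
      + 1 / 2 * (quadForm (Md t) (η t) + 2 * ⟪η t, mulVecE (M t) (ηd t)⟫) ≤ -δ * V t + ε := by
    rw [lyapunov_deriv_eq_of_closedLoop (hskew t ht) (hloop₁ t ht) (hloop₂ t ht), hδ]
    have hdamp := inner_sub_damping_le hε hk₁.le hBlo (hχ t ht) (hB t (η t))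
    have hdecay := neg_mul_sub_mul_le_neg_min_div_mul (κ := Blo * k₁) hα.le (by positivity) hb0
      (sq_nonneg ‖ξ t‖) (sq_nonneg ‖η t‖) (hVup t)
    linarith
  have hbound t (ht : 0 ≤ t) : ‖z₁ t‖ ^ 2 ≤ 1 / a * (V 0 + ε / δ) := by
    rw [one_div, le_inv_mul_iff₀ ha0]
    exact (hVlow t).trans (le_add_div_of_hasDerivAt_le_neg_mul_add hδ0 hε.le hVderiv hdiss
      ((hVlow 0).trans' (by positivity)) ht)
  refine ⟨hbound, √(1 / a * (V 0 + ε / δ)), fun t ht => ⟨?_, ?_⟩⟩ <;>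
    exact Real.le_sqrt_of_sq_le (by nlinarith [hz t, hbound t ht, sq_nonneg ‖ξ t‖, sq_nonneg ‖η t‖])

/-- under the hypotheses of Theorem 1, the trajectory is uniformly
bounded: `‖z₁(t)‖² ≤ (1/a)(V(0) + ε/δ)` for all `t ≥ 0`; in particular `ξ` and `η`
are bounded functions on `[0,∞)`. -/
theorem stmt6
    (ξ η ξd ηd : ℝ → EuclideanSpace ℝ (Fin 4))
    (hξ : ∀ t, 0 ≤ t → HasDerivAt ξ (ξd t) t) (hη : ∀ t, 0 ≤ t → HasDerivAt η (ηd t) t)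
    (z₁ : ℝ → WithLp 2 (EuclideanSpace ℝ (Fin 4) × EuclideanSpace ℝ (Fin 4)))
    (hz₁ : z₁ = fun t => stack (ξ t) (η t))
    (c_m c_M : ℝ) (hcm : 0 < c_m) (hcmM : c_m ≤ c_M)
    (M Md : ℝ → Matrix (Fin 4) (Fin 4) ℝ)
    (hM : ∀ (i j : Fin 4) (t : ℝ), 0 ≤ t → HasDerivAt (fun s => M s i j) (Md t i j) t)
    (hMsymm : ∀ t, (M t).IsSymm)
    (hMlow : ∀ t (x : EuclideanSpace ℝ (Fin 4)), c_m * ‖x‖ ^ 2 ≤ quadForm (M t) x)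
    (hMhigh : ∀ t (x : EuclideanSpace ℝ (Fin 4)), quadForm (M t) x ≤ c_M * ‖x‖ ^ 2)
    (C B : ℝ → Matrix (Fin 4) (Fin 4) ℝ)
    (hskew : ∀ t, 0 ≤ t → quadForm ((1 / 2 : ℝ) • Md t - C t) (η t) = 0)
    (Blo : ℝ) (hBlo : (1 / 4 : ℝ) ≤ Blo)
    (hB : ∀ t (x : EuclideanSpace ℝ (Fin 4)), Blo * ‖x‖ ^ 2 ≤ quadForm (B t) x)
    (ρ₁ ρ₂ ρ₃ : ℝ) (hρ₁ : 0 ≤ ρ₁) (hρ₂ : 0 ≤ ρ₂) (hρ₃ : 0 ≤ ρ₃)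
    (ρ : ℝ → ℝ) (hρ : ρ = fun s => ρ₁ + ρ₂ * s + ρ₃ * s ^ 2)
    (χ : ℝ → EuclideanSpace ℝ (Fin 4)) (hχ : ∀ t, 0 ≤ t → ‖χ t‖ ≤ ρ ‖z₁ t‖)
    (α k₁ ε : ℝ) (hα : 0 < α) (hk₁ : 0 < k₁) (hε : 0 < ε)
    (hloop₁ : ∀ t, 0 ≤ t → ξd t = η t - α • ξ t)
    (hloop₂ : ∀ t, 0 ≤ t → mulVecE (M t) (ηd t)
      = χ t - mulVecE (C t) (η t) - ξ t
        - mulVecE (B t) (k₁ • η t + ((1 / ε) * (ρ ‖z₁ t‖) ^ 2) • η t))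
    (V : ℝ → ℝ)
    (hV : V = fun t => (1 / 2) * ‖ξ t‖ ^ 2 + (1 / 2) * quadForm (M t) (η t))
    (a b δ : ℝ) (ha : a = min (1 / 2) (c_m / 2)) (hb : b = max (1 / 2) (c_M / 2))
    (hδ : δ = min α (Blo * k₁) / b) :
    (∀ t, 0 ≤ t → ‖z₁ t‖ ^ 2 ≤ (1 / a) * (V 0 + ε / δ)) ∧
      ∃ K : ℝ, ∀ t, 0 ≤ t → ‖ξ t‖ ≤ K ∧ ‖η t‖ ≤ K :=
  stmt6_general ξ η ξd ηd hξ hη z₁ hz₁ c_m c_M hcm M Md hM hMsymm hMlow hMhigh C B hskew Blo hBlo hB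
    ρ χ hχ α k₁ ε hα hk₁ hε hloop₁ hloop₂ V hV a b δ ha hb hδ
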